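/- arXiv:2302.07193 — 2 statements merged into one kernel-verified Lean document; each statement's English description precedes it below -/
import Mathlib

section
/- Let A and B be d×d complex matrices such that the pair (A,B) has maximal rank and A B† is Hermitian. Then the following are equivalent: (1) the vertex scattering matrix σ(k) = −(A + ikB)⁻¹(A − ikB) is the same matrix for all nonzero real k; (2) A B† = 0; (3) there exists a nonzero real k such that σ(k)² = I; (4) σ(k)² = I for all nonzero real k. -/
open Matrix

/-- The vertex scattering matrix σ(k) = −(A + ikB)⁻¹(A − ikB). -/
noncomputable def vertexScattering {d : ℕ} (A B : Matrix (Fin d) (Fin d) ℂ) (k : ℝ) :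
    Matrix (Fin d) (Fin d) ℂ :=
  -((A + (Complex.I * (k : ℂ)) • B)⁻¹ * (A - (Complex.I * (k : ℂ)) • B))

/-!
Write `W(k) = A + ikB`, so that `σ(k) = -W(k)⁻¹ W(-k)`. Since `ABᴴ` is Hermitian,
`W(k) W(k')ᴴ = AAᴴ + kk' BBᴴ + i(k - k') ABᴴ`. For `k' = k` this is the Gram matrix of the
full-rank matrix `(A kB)`, so `W(k)` is invertible, and `W(k)`, `W(-k)` share that Gram matrix.
Hence `σ(k) σ(k') = 1` is equivalent to `W(-k) W(k')ᴴ = W(k) W(-k')ᴴ`, i.e. to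
`(k + k') ABᴴ = 0`. With `k' = -k` this says `σ(-k) = σ(k)⁻¹`; with `k' = k` it says
`σ(k)² = 1 ↔ ABᴴ = 0`, and then `σ(k₁) = σ(k₂)⁻¹ = σ(k₂)`.
-/

namespace Matrix

variable {n : Type*} [Fintype n] [DecidableEq n]

theorem isUnit_of_card_le_rank {K : Type*} [Field K] {M : Matrix n n K}
    (h : Fintype.card n ≤ M.rank) : IsUnit M := by
  rw [← mulVec_surjective_iff_isUnit, ← coe_mulVecLin, ← LinearMap.range_eq_top]
  refine Submodule.eq_top_of_finrank_eq (le_antisymm (Submodule.finrank_le _) ?_)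
  rwa [Module.finrank_fintype_fun_eq_card]

theorem rank_fromCols_smul_right {m R : Type*} [Fintype m] [CommRing R] (A B : Matrix m n R)
    {c : R} (hc : IsUnit c) : (fromCols A (c • B)).rank = (fromCols A B).rank := by
  let D : Matrix (n ⊕ n) (n ⊕ n) R := fromBlocks 1 0 0 (c • 1)
  have h : fromCols A (c • B) = fromCols A B * D := by
    rw [fromCols_mul_fromBlocks]; simp
  rw [h, rank_mul_eq_left_of_isUnit_det]
  simp [D, det_fromBlocks_zero₂₁, hc.pow]

variable {R : Type*} [CommRing R]

theorem mul_inv_eq_mul_inv_iff_mul_conjTranspose_eq {m : Type*} [StarRing R]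
    {U V : Matrix n n R} (X Y : Matrix m n R) (hU : IsUnit U.det) (hV : IsUnit V.det)
    (hUV : U * Uᴴ = V * Vᴴ) : X * U⁻¹ = Y * V⁻¹ ↔ X * Uᴴ = Y * Vᴴ := by
  have hG : IsUnit (U * Uᴴ).det := by
    rw [det_mul, det_conjTranspose]
    exact hU.mul hU.star
  let := invertibleOfIsUnitDet _ hG
  have hX : X * Uᴴ = X * U⁻¹ * (U * Uᴴ) := by
    rw [Matrix.mul_assoc, nonsing_inv_mul_cancel_left _ _ hU]
  have hY : Y * Vᴴ = Y * V⁻¹ * (U * Uᴴ) := by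
    rw [hUV, Matrix.mul_assoc, nonsing_inv_mul_cancel_left _ _ hV]
  rw [hX, hY, mul_left_inj_of_invertible]

theorem inv_mul_mul_eq_one_iff {U V Z : Matrix n n R}
    (hU : IsUnit U.det) (hV : IsUnit V.det) : U⁻¹ * Z * V = 1 ↔ Z = U * V⁻¹ := by
  let := invertibleOfIsUnitDet _ hU
  let := invertibleOfIsUnitDet _ hV
  rw [Matrix.mul_assoc, inv_mul_eq_iff_eq_mul_of_invertible, Matrix.mul_one,
    eq_comm (a := Z * V), ← mul_inv_eq_iff_eq_mul_of_invertible, eq_comm]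

end Matrix

open Complex

section Pencil

variable {n : Type*} [Fintype n] [DecidableEq n] (A B : Matrix n n ℂ)

noncomputable def imPencil (k : ℝ) : Matrix n n ℂ := A + (I * k) • B

theorem imPencil_mul_conjTranspose (hherm : (A * Bᴴ).IsHermitian) (k k' : ℝ) :
    imPencil A B k * (imPencil A B k')ᴴ =
      A * Aᴴ + ((k * k' : ℝ) : ℂ) • (B * Bᴴ) + (I * (k - k' : ℝ)) • (A * Bᴴ) := by
  have hBA : B * Aᴴ = A * Bᴴ := by
    simpa only [conjTranspose_mul, conjTranspose_conjTranspose] using hherm.eq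
  have hstar : star (I * k') = -(I * k') := by simp
  have hIk : -(I * k') * (I * k) = ((k * k' : ℝ) : ℂ) := by
    push_cast
    linear_combination -(k * k' : ℂ) * I_sq
  rw [imPencil, imPencil, conjTranspose_add, conjTranspose_smul, hstar]
  simp only [add_mul, mul_add, smul_mul, Matrix.mul_smul, smul_smul, hBA, hIk]
  push_cast
  module

theorem imPencil_mul_conjTranspose_self (hherm : (A * Bᴴ).IsHermitian) (k : ℝ) :
    imPencil A B k * (imPencil A B k)ᴴ =
      fromCols A ((k : ℂ) • B) * (fromCols A ((k : ℂ) • B))ᴴ := by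
  rw [imPencil_mul_conjTranspose A B hherm, conjTranspose_fromCols_eq_fromRows_conjTranspose,
    fromCols_mul_fromRows, conjTranspose_smul, smul_mul, Matrix.mul_smul, smul_smul]
  simp

open ComplexOrder in
theorem isUnit_imPencil (hrank : (fromCols A B).rank = Fintype.card n)
    (hherm : (A * Bᴴ).IsHermitian) {k : ℝ} (hk : k ≠ 0) : IsUnit (imPencil A B k) := by
  refine isUnit_of_card_le_rank ?_
  calc Fintype.card n = (fromCols A ((k : ℂ) • B)).rank := by
        rw [rank_fromCols_smul_right _ _ (by simpa using hk), hrank]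
    _ = (imPencil A B k * (imPencil A B k)ᴴ).rank := by
        rw [imPencil_mul_conjTranspose_self A B hherm, rank_self_mul_conjTranspose]
    _ ≤ (imPencil A B k).rank := rank_mul_le_left _ _

end Pencil

section VertexScattering

variable {d : ℕ} (A B : Matrix (Fin d) (Fin d) ℂ)

theorem vertexScattering_eq_imPencil (k : ℝ) :
    vertexScattering A B k = -((imPencil A B k)⁻¹ * imPencil A B (-k)) := by
  simp [vertexScattering, imPencil, sub_eq_add_neg]

theorem vertexScattering_mul_eq_one_iff (hrank : (fromCols A B).rank = d)
    (hherm : (A * Bᴴ).IsHermitian) {k k' : ℝ} (hk : k ≠ 0) (hk' : k' ≠ 0) :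
    vertexScattering A B k * vertexScattering A B k' = 1 ↔ k + k' = 0 ∨ A * Bᴴ = 0 := by
  have hdet {j : ℝ} (hj : j ≠ 0) : IsUnit (imPencil A B j).det :=
    (isUnit_iff_isUnit_det _).mp (isUnit_imPencil A B (by rwa [Fintype.card_fin]) hherm hj)
  have hgram : imPencil A B k' * (imPencil A B k')ᴴ =
      imPencil A B (-k') * (imPencil A B (-k'))ᴴ := by
    simp [imPencil_mul_conjTranspose A B hherm]
  rw [vertexScattering_eq_imPencil, vertexScattering_eq_imPencil, neg_mul_neg,
    ← Matrix.mul_assoc, Matrix.mul_assoc _ (imPencil A B (-k)),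
    inv_mul_mul_eq_one_iff (hdet hk) (hdet (neg_ne_zero.mpr hk')),
    mul_inv_eq_mul_inv_iff_mul_conjTranspose_eq _ _ (hdet hk') (hdet (neg_ne_zero.mpr hk')) hgram,
    imPencil_mul_conjTranspose A B hherm, imPencil_mul_conjTranspose A B hherm]
  have hcoeff :
      I * ((-k - k' : ℝ) : ℂ) - I * ((k - -k' : ℝ) : ℂ) = (-2 * I) * ((k + k' : ℝ) : ℂ) := by
    push_cast
    ring
  rw [neg_mul, mul_neg, add_right_inj, ← sub_eq_zero, ← sub_smul, smul_eq_zero, hcoeff,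
    mul_eq_zero, Complex.ofReal_eq_zero]
  simp [I_ne_zero]

theorem vertexScattering_mul_vertexScattering_neg (hrank : (fromCols A B).rank = d)
    (hherm : (A * Bᴴ).IsHermitian) {k : ℝ} (hk : k ≠ 0) :
    vertexScattering A B k * vertexScattering A B (-k) = 1 :=
  (vertexScattering_mul_eq_one_iff A B hrank hherm hk (neg_ne_zero.mpr hk)).mpr
    (Or.inl (add_neg_cancel k))

theorem vertexScattering_sq_eq_one_iff (hrank : (fromCols A B).rank = d)
    (hherm : (A * Bᴴ).IsHermitian) {k : ℝ} (hk : k ≠ 0) :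
    vertexScattering A B k ^ 2 = 1 ↔ A * Bᴴ = 0 := by
  rw [sq, vertexScattering_mul_eq_one_iff A B hrank hherm hk hk, ← two_mul]
  simp [hk]

end VertexScattering

theorem k_independence_tfae {d : ℕ}
    (A B : Matrix (Fin d) (Fin d) ℂ)
    (hrank : (Matrix.fromCols A B).rank = d)
    (hherm : (A * Bᴴ).IsHermitian) :
    [ (∀ k₁ k₂ : ℝ, k₁ ≠ 0 → k₂ ≠ 0 →
        vertexScattering A B k₁ = vertexScattering A B k₂),
      A * Bᴴ = 0,
      (∃ k : ℝ, k ≠ 0 ∧ (vertexScattering A B k) ^ 2 = 1),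
      (∀ k : ℝ, k ≠ 0 → (vertexScattering A B k) ^ 2 = 1) ].TFAE := by
  have hsq {k : ℝ} (hk : k ≠ 0) : vertexScattering A B k ^ 2 = 1 ↔ A * Bᴴ = 0 :=
    vertexScattering_sq_eq_one_iff A B hrank hherm hk
  tfae_have 2 → 4 := fun hM _ hk => (hsq hk).mpr hM
  tfae_have 4 → 3 := fun h => ⟨1, one_ne_zero, h 1 one_ne_zero⟩
  tfae_have 3 → 2 := fun ⟨_, hk, h⟩ => (hsq hk).mp h
  tfae_have 2 → 1 := fun hM k₁ k₂ hk₁ hk₂ =>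
    left_inv_eq_left_inv
      ((vertexScattering_mul_eq_one_iff A B hrank hherm hk₁ hk₂).mpr (Or.inr hM))
      (by rw [← sq, hsq hk₂]; exact hM)
  tfae_have 1 → 3 := fun h => by
    refine ⟨1, one_ne_zero, ?_⟩
    rw [sq]
    nth_rewrite 2 [h 1 (-1) one_ne_zero (by norm_num)]
    exact vertexScattering_mul_vertexScattering_neg A B hrank hherm one_ne_zero
  tfae_finish
end

section
/- Let U be an n×n unitary complex matrix and set A = (1/2)(I − U) and B = (i/2)(I + U). Then the pair (A,B) has maximal rank, A B† is Hermitian, the matrix A − iB is invertible, and −(A − iB)⁻¹(A + iB) = U. -/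
open Matrix

/-!
With `A = ½(1 - U)` and `B = (i/2)(1 + U)` one has `A - iB = 1` and `A + iB = -U` for every `U`,
so the vertex scattering matrix `-(A - iB)⁻¹(A + iB)` is `U` itself, and `(A B)` has a right
inverse, hence full row rank. Unitarity gives `AB† = (i/4)(U - U†)`, which is Hermitian.
-/

theorem Matrix.rank_eq_card_height_of_mul_eq_one {m n R : Type*} [Fintype m] [DecidableEq m]
    [Fintype n] [CommSemiring R] [StrongRankCondition R] {A : Matrix m n R} {C : Matrix n m R}
    (h : A * C = 1) : A.rank = Fintype.card m :=
  le_antisymm A.rank_le_card_height <| by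
    simpa [h] using rank_mul_le_left A C

theorem Matrix.rank_fromCols_eq_card_of_sub_smul_eq_one {m R : Type*} [Fintype m] [DecidableEq m]
    [CommRing R] [StrongRankCondition R] {A B : Matrix m m R} {c : R} (h : A - c • B = 1) :
    (fromCols A B).rank = Fintype.card m :=
  rank_eq_card_height_of_mul_eq_one (C := fromRows 1 (-c • 1)) <| by
    rw [fromCols_mul_fromRows, mul_one, mul_smul_comm, mul_one, neg_smul, ← sub_eq_add_neg, h]

section CayleyPair

open Complex

variable {R : Type*} [Ring R] [Algebra ℂ R] (U : R)

private theorem I_mul_I_div_two : I * (I / 2) = -(1 / 2) := by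
  rw [mul_div_assoc', I_mul_I]; ring

theorem cayleyPair_sub_I_smul :
    (1 / 2 : ℂ) • (1 - U) - I • ((I / 2) • (1 + U)) = 1 := by
  simp only [smul_smul, I_mul_I_div_two, smul_sub, smul_add]
  module

theorem cayleyPair_add_I_smul :
    (1 / 2 : ℂ) • (1 - U) + I • ((I / 2) • (1 + U)) = -U := by
  simp only [smul_smul, I_mul_I_div_two, smul_sub, smul_add]
  module

theorem isSelfAdjoint_cayleyPair_mul_star [StarRing R] [StarModule ℂ R] (hU : U * star U = 1) :
    IsSelfAdjoint ((1 / 2 : ℂ) • (1 - U) * star ((I / 2) • (1 + U))) := by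
  have hprod : (1 / 2 : ℂ) • (1 - U) * star ((I / 2) • (1 + U)) = (-I / 4) • (star U - U) := by
    simp only [star_smul, star_add, star_one, smul_mul_smul_comm, sub_mul, mul_add, one_mul,
      mul_one, hU, star_div₀, star_ofNat, Complex.star_def, conj_I]
    module
  rw [hprod, IsSelfAdjoint, star_smul, star_sub, star_star]
  simp only [star_div₀, star_neg, Complex.star_def, conj_I, map_ofNat]
  module

end CayleyPair

theorem dirac_vertex_conditions_realize_unitary {n : ℕ}
    (U : Matrix (Fin n) (Fin n) ℂ) (hU : U ∈ Matrix.unitaryGroup (Fin n) ℂ) :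
    (Matrix.fromCols ((1 / 2 : ℂ) • (1 - U)) ((Complex.I / 2) • (1 + U))).rank = n ∧
    (((1 / 2 : ℂ) • (1 - U)) * ((Complex.I / 2) • (1 + U))ᴴ).IsHermitian ∧
    IsUnit (((1 / 2 : ℂ) • (1 - U)) - Complex.I • ((Complex.I / 2) • (1 + U))) ∧
    -((((1 / 2 : ℂ) • (1 - U)) - Complex.I • ((Complex.I / 2) • (1 + U)))⁻¹
        * (((1 / 2 : ℂ) • (1 - U)) + Complex.I • ((Complex.I / 2) • (1 + U)))) = U := by
  refine ⟨?_, ?_, ?_, ?_⟩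
  · simpa using rank_fromCols_eq_card_of_sub_smul_eq_one (cayleyPair_sub_I_smul U)
  · exact isHermitian_iff_isSelfAdjoint.mpr
      (isSelfAdjoint_cayleyPair_mul_star U (mem_unitaryGroup_iff.mp hU))
  · rw [cayleyPair_sub_I_smul]; exact isUnit_one
  · rw [cayleyPair_sub_I_smul, cayleyPair_add_I_smul, inv_one, one_mul, neg_neg]
end
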